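/- arXiv:1603.06718 — 2 statements merged into one kernel-verified Lean document; each statement's English description precedes it below -/
import Mathlib

section
/- Let H be a Hilbert space, (φₙ) a sequence of proper convex lower semicontinuous functionals φₙ: H → [0,∞] with φₙ(0) = 0, and suppose that for every λ ≥ 0 the union over n of the sublevel sets {u : φₙ(u) ≤ λ} is relatively compact in H. If Sₙ(t) denotes the contraction semigroup generated by -∂φₙ, then for every t > 0 and every bounded set B ⊆ H, the union over n of Sₙ(t)(B) is relatively compact in H. -/
open MeasureTheory Set Filter Topology
open scoped ENNReal NNReal

/-- An a.e. mean value inequality: a Lipschitz function on `[a,b]` whose derivative exists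
and is bounded by `c` outside a null set satisfies `g b - g a ≤ c * (b - a)`. -/
lemma ae_mvt {g g' : ℝ → ℝ} {a b c : ℝ} {K : ℝ≥0} (hab : a ≤ b)
    (hlip : LipschitzOnWith K g (Set.Icc a b))
    {N : Set ℝ} (hN : volume N = 0)
    (hder : ∀ τ ∈ Set.Ioo a b, τ ∉ N → HasDerivAt g (g' τ) τ ∧ g' τ ≤ c) :
    g b - g a ≤ c * (b - a) := by
  have hD : (0:ℝ) < (b - a) + (K:ℝ) + |c| + 2 := by
    have h1 : (0:ℝ) ≤ (K:ℝ) := K.coe_nonneg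
    have h2 := abs_nonneg c
    linarith [sub_nonneg.2 hab]
  set D : ℝ := (b - a) + (K:ℝ) + |c| + 2 with hDdef
  -- reduce to ε-version
  have key : ∀ ε : ℝ, 0 < ε → g b - g a ≤ c * (b - a) + ε * D := by
    intro ε hε
    -- open set U containing N ∪ {a} of small measure
    obtain ⟨U, hUsub, hUopen, hUvol⟩ :=
      Set.exists_isOpen_lt_of_lt (N ∪ {a}) (ENNReal.ofReal ε)
        (by
          rw [measure_union_null hN (by simp)]
          exact ENNReal.ofReal_pos.2 hε)
    have hUfin : ∀ x, volume (U ∩ Set.Ioc a x) ≠ ⊤ :=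
      fun x => ne_top_of_le_ne_top (ne_top_of_lt hUvol) (measure_mono inter_subset_left)
    set m : ℝ → ℝ := fun x => (volume (U ∩ Set.Ioc a x)).toReal with hmdef
    have m_mono : ∀ {x y : ℝ}, x ≤ y → m x ≤ m y := by
      intro x y hxy
      exact ENNReal.toReal_mono (hUfin y)
        (measure_mono (inter_subset_inter_right _ (Set.Ioc_subset_Ioc_right hxy)))
    have m_lip : ∀ {x y : ℝ}, x ≤ y → m y - m x ≤ y - x := by
      intro x y hxy
      have h1 : U ∩ Set.Ioc a y ⊆ (U ∩ Set.Ioc a x) ∪ Set.Ioc x y := by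
        intro z hz
        rcases le_or_gt z x with h | h
        · exact Or.inl ⟨hz.1, hz.2.1, h⟩
        · exact Or.inr ⟨h, hz.2.2⟩
      have h2 : volume (U ∩ Set.Ioc a y) ≤ volume (U ∩ Set.Ioc a x) + volume (Set.Ioc x y) :=
        le_trans (measure_mono h1) (measure_union_le _ _)
      have hfin2 : volume (U ∩ Set.Ioc a x) + volume (Set.Ioc x y) ≠ ⊤ :=
        ENNReal.add_ne_top.2 ⟨hUfin x, by simp [Real.volume_Ioc]⟩
      have h3 := ENNReal.toReal_mono hfin2 h2
      rw [ENNReal.toReal_add (hUfin x) (by simp [Real.volume_Ioc])] at h3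
      simp only [Real.volume_Ioc, ENNReal.toReal_ofReal (sub_nonneg.2 hxy)] at h3
      linarith [h3]
    have m_cont : Continuous m := by
      apply LipschitzWith.continuous (K := 1)
      apply LipschitzWith.of_dist_le_mul
      intro x y
      rw [Real.dist_eq, Real.dist_eq, NNReal.coe_one, one_mul]
      rcases le_total x y with h | h
      · rw [abs_sub_comm, abs_of_nonneg (sub_nonneg.2 (m_mono h)), abs_of_nonpos (by linarith)]
        linarith [m_lip h]
      · rw [abs_of_nonneg (sub_nonneg.2 (m_mono h)), abs_of_nonneg (by linarith)]
        linarith [m_lip h]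
    have m_gain : ∀ {x y : ℝ}, a ≤ x → x ≤ y → Set.Ioc x y ⊆ U → m x + (y - x) ≤ m y := by
      intro x y hax hxy hsub
      have hdisj : Disjoint (U ∩ Set.Ioc a x) (Set.Ioc x y) := by
        apply Set.disjoint_left.2
        rintro z ⟨_, _, hz2⟩ ⟨hz3, _⟩
        exact absurd hz2 (not_le.2 hz3)
      have hsub2 : (U ∩ Set.Ioc a x) ∪ Set.Ioc x y ⊆ U ∩ Set.Ioc a y := by
        rintro z (⟨h1, h2⟩ | h1)
        · exact ⟨h1, Set.Ioc_subset_Ioc_right hxy h2⟩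
        · exact ⟨hsub h1, Set.Ioc_subset_Ioc_left hax h1⟩
      have hmle := measure_mono (μ := volume) hsub2
      have hms : volume ((U ∩ Set.Ioc a x) ∪ Set.Ioc x y)
          = volume (U ∩ Set.Ioc a x) + volume (Set.Ioc x y) :=
        measure_union hdisj measurableSet_Ioc
      rw [hms] at hmle
      have h3 := ENNReal.toReal_mono (hUfin y) hmle
      rw [ENNReal.toReal_add (hUfin x) (by simp [Real.volume_Ioc])] at h3
      simp only [Real.volume_Ioc, ENNReal.toReal_ofReal (sub_nonneg.2 hxy)] at h3
      linarith
    set K' : ℝ := (K:ℝ) + |c| + 1 with hK'def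
    have hK'0 : 0 ≤ K' := by positivity
    set G : ℝ → ℝ := fun x => g x - (c + ε) * (x - a) - K' * m x with hGdef
    have hma : m a = 0 := by simp [hmdef]
    have hGa : G a = g a := by simp [hGdef, hma]
    set s : Set ℝ := {x | x ∈ Set.Icc a b ∧ G x ≤ g a} with hsdef
    have hclosed : IsClosed (s ∩ Set.Icc a b) := by
      have hGcont : ContinuousOn G (Set.Icc a b) := by
        apply ContinuousOn.sub
        apply ContinuousOn.sub hlip.continuousOn
        · exact (continuous_const.mul (continuous_id.sub continuous_const)).continuousOn
        · exact (continuous_const.mul m_cont).continuousOn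
      have hset : s ∩ Set.Icc a b = Set.Icc a b ∩ G ⁻¹' (Set.Iic (g a)) := by
        ext x; simp only [hsdef, Set.mem_inter_iff, Set.mem_setOf_eq, Set.mem_preimage,
          Set.mem_Iic]; tauto
      rw [hset]
      exact hGcont.preimage_isClosed_of_isClosed isClosed_Icc isClosed_Iic
    have hmem_a : a ∈ s := ⟨⟨le_refl a, hab⟩, by rw [hGa]⟩
    have hgt : ∀ x ∈ s ∩ Set.Ico a b, ∀ y ∈ Set.Ioi x, (s ∩ Set.Ioc x y).Nonempty := by
      rintro x ⟨⟨hxIcc, hGx⟩, hax, hxb⟩ y (hy : x < y)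
      by_cases hxU : x ∈ U
      · -- inside U: use the measure gain
        obtain ⟨δ, hδpos, hball⟩ := Metric.isOpen_iff.1 hUopen x hxU
        set z : ℝ := min (x + δ/2) (min y b) with hzdef
        have hxz : x < z := lt_min (by linarith) (lt_min hy hxb)
        have hzb : z ≤ b := le_trans (min_le_right _ _) (min_le_right _ _)
        have hzy : z ≤ y := le_trans (min_le_right _ _) (min_le_left _ _)
        have hsubU : Set.Ioc x z ⊆ U := by
          intro w hw
          apply hball
          rw [Metric.mem_ball, Real.dist_eq, abs_of_pos (sub_pos.2 hw.1)]
          have : z ≤ x + δ/2 := min_le_left _ _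
          linarith [hw.2]
        have hgain := m_gain hax (le_of_lt hxz) hsubU
        have hglip : g z - g x ≤ (K:ℝ) * (z - x) := by
          have hd := hlip.dist_le_mul z ⟨le_trans hax (le_of_lt hxz), hzb⟩ x ⟨hax, hxIcc.2⟩
          rw [Real.dist_eq, Real.dist_eq, abs_of_pos (sub_pos.2 hxz)] at hd
          calc g z - g x ≤ |g z - g x| := le_abs_self _
            _ ≤ (K:ℝ) * (z - x) := hd
        refine ⟨z, ⟨⟨le_trans hax (le_of_lt hxz), hzb⟩, ?_⟩, hxz, hzy⟩
        have e1 : K' * (z - x) ≤ K' * (m z - m x) :=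
          mul_le_mul_of_nonneg_left (by linarith) hK'0
        have hcoef : ((K:ℝ) - (c + ε) - K') * (z - x) ≤ 0 := by
          apply mul_nonpos_of_nonpos_of_nonneg _ (by linarith)
          simp only [hK'def]; linarith [neg_le_abs c]
        have hGz : G z ≤ G x := by
          simp only [hGdef]
          nlinarith [hglip, e1, hcoef]
        linarith
      · -- differentiability point
        have hxa : x ≠ a := by
          rintro rfl
          exact hxU (hUsub (Or.inr rfl))
        have hxN : x ∉ N := fun h => hxU (hUsub (Or.inl h))
        obtain ⟨hd, hdc⟩ := hder x ⟨lt_of_le_of_ne hax (Ne.symm hxa), hxb⟩ hxN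
        rw [hasDerivAt_iff_tendsto_slope] at hd
        have hmono : 𝓝[>] x ≤ 𝓝[≠] x :=
          nhdsWithin_mono x (fun w hw => by
            simp only [Set.mem_compl_iff, Set.mem_singleton_iff]
            exact ne_of_gt hw)
        have hslope : ∀ᶠ z in 𝓝[>] x, slope g x z < c + ε :=
          (hd.mono_left hmono).eventually_lt_const (by linarith)
        have hIoo : Set.Ioo x (min y b) ∈ 𝓝[>] x :=
          Ioo_mem_nhdsGT_of_mem ⟨le_refl x, lt_min hy hxb⟩
        obtain ⟨z, hz1, hz2⟩ := (hslope.and (eventually_of_mem hIoo (fun w hw => hw))).exists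
        have hxz : x < z := hz2.1
        have hzy : z < min y b := hz2.2
        have hzb : z ≤ b := le_of_lt (lt_of_lt_of_le hzy (min_le_right _ _))
        have hgz : g z - g x ≤ (c + ε) * (z - x) := by
          rw [slope_def_field] at hz1
          exact le_of_lt ((div_lt_iff₀ (sub_pos.2 hxz)).1 hz1)
        refine ⟨z, ⟨⟨le_trans hax (le_of_lt hxz), hzb⟩, ?_⟩, hxz,
          le_of_lt (lt_of_lt_of_le hzy (min_le_left _ _))⟩
        have hmz : m x ≤ m z := m_mono (le_of_lt hxz)
        have e1 : 0 ≤ K' * (m z - m x) := mul_nonneg hK'0 (by linarith)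
        have hGz : G z ≤ G x := by
          simp only [hGdef]
          nlinarith [hgz, e1]
        linarith
    have hb : b ∈ s := (hclosed.Icc_subset_of_forall_exists_gt hmem_a hgt) ⟨hab, le_refl b⟩
    have hGb : G b ≤ g a := hb.2
    have hmb : m b ≤ ε := by
      apply ENNReal.toReal_le_of_le_ofReal (le_of_lt hε)
      exact le_trans (measure_mono inter_subset_left) (le_of_lt hUvol)
    have h1 : g b - g a ≤ (c+ε)*(b-a) + K' * m b := by
      simp only [hGdef] at hGb; linarith
    have h2 : K' * m b ≤ K' * ε := mul_le_mul_of_nonneg_left hmb hK'0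
    simp only [hDdef, hK'def] at *
    nlinarith [sub_nonneg.2 hab]
  by_contra hcon
  push_neg at hcon
  set ε0 : ℝ := (g b - g a - c * (b-a)) / D with hε0
  have hε0pos : 0 < ε0 := div_pos (by linarith) hD
  have hk := key (ε0/2) (by linarith)
  rw [hε0] at hk
  have hfin : g b - g a ≤ c * (b-a) + (g b - g a - c*(b-a))/2 := by
    calc g b - g a ≤ c*(b-a) + ((g b - g a - c*(b-a))/D/2) * D := hk
      _ = c*(b-a) + (g b - g a - c*(b-a))/2 := by field_simp
  linarith

/-- Compactness of a family of semigroups generated by subdifferentials of convex l.s.c.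
functionals `φₙ : H → [0,∞]` with `φₙ(0) = 0` whose sublevel sets are uniformly relatively
compact: for every `t > 0` and bounded `B ⊆ H`, the union over `n` of `Sₙ(t)(B)` is
relatively compact in `H`. -/
theorem stmt16 {H : Type*} [NormedAddCommGroup H] [InnerProductSpace ℝ H] [CompleteSpace H]
    (φ : ℕ → H → ℝ≥0∞)
    (hφ0 : ∀ n, φ n 0 = 0)
    (hconv : ∀ n, ∀ x y : H, ∀ a b : ℝ, 0 ≤ a → 0 ≤ b → a + b = 1 →
      φ n (a • x + b • y) ≤ ENNReal.ofReal a * φ n x + ENNReal.ofReal b * φ n y)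
    (hlsc : ∀ n, LowerSemicontinuous (φ n))
    (hsub : ∀ lam : ℝ, 0 ≤ lam →
      IsCompact (closure (⋃ n, {x : H | φ n x ≤ ENNReal.ofReal lam})))
    (S : ℕ → ℝ → H → H)
    (hS0 : ∀ n x, S n 0 x = x)
    (hsemi : ∀ n, ∀ t ≥ (0:ℝ), ∀ s ≥ (0:ℝ), ∀ x, S n (t + s) x = S n t (S n s x))
    (hcontr : ∀ n, ∀ t ≥ (0:ℝ), ∀ x y, ‖S n t x - S n t y‖ ≤ ‖x - y‖)
    (hdecay : ∀ n, ∀ x, ∀ t ≥ (0:ℝ), φ n (S n t x) ≤ φ n x)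
    (hgen : ∀ n, ∀ ubar : H, ∃ u' : ℝ → H,
      (∀ᵐ t ∂(volume.restrict (Set.Ioi (0:ℝ))),
        HasDerivAt (fun τ => S n τ ubar) (u' t) t ∧
        ∀ v : H, ((inner ℝ (-(u' t)) (v - S n t ubar) : ℝ) : EReal) + (φ n (S n t ubar) : EReal)
          ≤ (φ n v : EReal)) ∧
      (∀ s t : ℝ, 0 < s → s ≤ t →
        φ n (S n t ubar) + ENNReal.ofReal (∫ τ in s..t, ‖u' τ‖ ^ 2) = φ n (S n s ubar)) ∧
      (∀ s : ℝ, 0 < s → φ n (S n s ubar) < ⊤)) :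
    ∀ t > (0:ℝ), ∀ B : Set H, Bornology.IsBounded B →
      IsCompact (closure (⋃ n, S n t '' B)) := by
  intro t ht B hB
  -- bound on B
  obtain ⟨R0, hR0⟩ := hB.subset_closedBall 0
  set R : ℝ := max R0 0 with hRdef
  have hR : ∀ u ∈ B, ‖u‖ ≤ R := by
    intro u hu
    have := hR0 hu
    rw [Metric.mem_closedBall, dist_zero_right] at this
    exact le_trans this (le_max_left _ _)
  have hR0' : 0 ≤ R := le_max_right _ _
  -- bound on the zero sublevel sets
  have hK0 : IsCompact (closure (⋃ n, {x : H | φ n x ≤ ENNReal.ofReal 0})) := hsub 0 le_rfl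
  obtain ⟨C0, hC0⟩ := hK0.isBounded.subset_closedBall 0
  set C : ℝ := max C0 0 with hCdef
  have hC : ∀ n, ∀ x : H, φ n x ≤ 0 → ‖x‖ ≤ C := by
    intro n x hx
    have hmem : x ∈ closure (⋃ n, {x : H | φ n x ≤ ENNReal.ofReal 0}) := by
      apply subset_closure
      exact Set.mem_iUnion.2 ⟨n, by simpa using hx⟩
    have := hC0 hmem
    rw [Metric.mem_closedBall, dist_zero_right] at this
    exact le_trans this (le_max_left _ _)
  have hC0' : 0 ≤ C := le_max_right _ _
  set M : ℝ := R + C with hMdef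
  have hM0 : 0 ≤ M := by linarith
  set lam : ℝ := M^2 / t with hlamdef
  have hlam0 : 0 ≤ lam := by positivity
  -- the key smoothing estimate
  have key : ∀ n, ∀ u ∈ B, φ n (S n t u) ≤ ENNReal.ofReal lam := by
    intro n u huB
    obtain ⟨u', hae, _hEn, hfin⟩ := hgen n u
    set w : ℝ → H := fun τ => S n τ u with hwdef
    set P : ℝ → Prop := fun τ =>
      HasDerivAt (fun τ => S n τ u) (u' τ) τ ∧
      ∀ v : H, ((inner ℝ (-(u' τ)) (v - S n τ u) : ℝ) : EReal) + (φ n (S n τ u) : EReal)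
        ≤ (φ n v : EReal) with hPdef
    have hnull : volume ({τ | ¬ P τ} ∩ Set.Ioi 0) = 0 := by
      have h1 := ae_iff.1 hae
      rwa [Measure.restrict_apply' measurableSet_Ioi] at h1
    -- a good point τ₀ in (0, t/2)
    have hexists : ∃ τ₀ ∈ Set.Ioo (0:ℝ) (t/2), P τ₀ := by
      by_contra hcon
      push_neg at hcon
      have hsubset : Set.Ioo (0:ℝ) (t/2) ⊆ {τ | ¬ P τ} ∩ Set.Ioi 0 := by
        intro τ hτ
        exact ⟨hcon τ hτ, hτ.1⟩
      have := measure_mono_null hsubset hnull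
      rw [Real.volume_Ioo] at this
      simp only [ENNReal.ofReal_eq_zero] at this
      linarith
    obtain ⟨τ₀, ⟨hτ₀pos, hτ₀lt⟩, hdτ₀, _⟩ := hexists
    set L : ℝ := ‖u' τ₀‖ with hLdef
    have hL0 : 0 ≤ L := norm_nonneg _
    -- shifted increments are contractions
    have stepA : ∀ d ≥ (0:ℝ), ∀ δ ≥ (0:ℝ),
        ‖w (τ₀ + d + δ) - w (τ₀ + d)‖ ≤ ‖w (τ₀ + δ) - w τ₀‖ := by
      intro d hd δ hδ
      have e1 : w (τ₀ + d + δ) = S n d (w (τ₀ + δ)) := by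
        have := hsemi n d hd (τ₀ + δ) (by linarith) u
        rw [hwdef]; simp only
        rw [show τ₀ + d + δ = d + (τ₀ + δ) by ring, this]
      have e2 : w (τ₀ + d) = S n d (w τ₀) := by
        have := hsemi n d hd τ₀ (by linarith) u
        rw [hwdef]; simp only
        rw [show τ₀ + d = d + τ₀ by ring, this]
      rw [e1, e2]
      exact hcontr n d hd _ _
    -- telescoping + derivative: Lipschitz bound from τ₀
    have stepB : ∀ δ ≥ (0:ℝ), ‖w (τ₀ + δ) - w τ₀‖ ≤ L * δ := by
      intro δ hδ
      rcases eq_or_lt_of_le hδ with rfl | hδpos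
      · simp
      have hbound : ∀ m : ℕ, 1 ≤ m →
          ‖w (τ₀ + δ) - w τ₀‖ ≤ (m:ℝ) * ‖w (τ₀ + δ/m) - w τ₀‖ := by
        intro m hm
        have hmpos : (0:ℝ) < m := by exact_mod_cast hm
        set F : ℕ → H := fun k => w (τ₀ + k * (δ/m)) with hFdef
        have htel : ∑ k ∈ Finset.range m, (F (k+1) - F k) = F m - F 0 :=
          Finset.sum_range_sub F m
        have hFm : F m = w (τ₀ + δ) := by
          simp only [hFdef]
          congr 1
          field_simp
        have hF0 : F 0 = w τ₀ := by simp [hFdef]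
        have hterm : ∀ k : ℕ, ‖F (k+1) - F k‖ ≤ ‖w (τ₀ + δ/m) - w τ₀‖ := by
          intro k
          have h1 : F (k+1) = w (τ₀ + k * (δ/m) + δ/m) := by
            simp only [hFdef]
            congr 1
            push_cast
            ring
          have h2 := stepA (k * (δ/m)) (by positivity) (δ/m) (by positivity)
          rw [h1, hFdef]
          exact h2
        calc ‖w (τ₀ + δ) - w τ₀‖ = ‖F m - F 0‖ := by rw [hFm, hF0]
          _ = ‖∑ k ∈ Finset.range m, (F (k+1) - F k)‖ := by rw [htel]
          _ ≤ ∑ k ∈ Finset.range m, ‖F (k+1) - F k‖ := norm_sum_le _ _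
          _ ≤ ∑ _k ∈ Finset.range m, ‖w (τ₀ + δ/m) - w τ₀‖ :=
              Finset.sum_le_sum (fun k _ => hterm k)
          _ = (m:ℝ) * ‖w (τ₀ + δ/m) - w τ₀‖ := by
              rw [Finset.sum_const, Finset.card_range, nsmul_eq_mul]
      -- take the limit m → ∞
      have hslope : Tendsto (slope w τ₀) (𝓝[≠] τ₀) (𝓝 (u' τ₀)) := by
        rw [← hasDerivAt_iff_tendsto_slope]
        exact hdτ₀
      have hseq : Tendsto (fun m : ℕ => τ₀ + δ/m) atTop (𝓝[≠] τ₀) := by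
        apply tendsto_nhdsWithin_of_tendsto_nhds_of_eventually_within
        · have : Tendsto (fun m : ℕ => δ/m) atTop (𝓝 0) :=
            tendsto_const_div_atTop_nhds_zero_nat δ
          have := tendsto_const_nhds (x := τ₀) (f := atTop (α := ℕ)) |>.add this
          simpa using this
        · filter_upwards [eventually_ge_atTop 1] with m hm
          have : (0:ℝ) < δ/m := by
            apply div_pos hδpos
            exact_mod_cast hm
          simp only [Set.mem_compl_iff, Set.mem_singleton_iff]
          intro hcontra
          nlinarith [this, hcontra]
      have htend : Tendsto (fun m : ℕ => δ * ‖slope w τ₀ (τ₀ + δ/m)‖) atTop (𝓝 (δ * L)) := by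
        apply Tendsto.const_mul
        exact (Tendsto.comp (continuous_norm.tendsto _) (hslope.comp hseq))
      have hineq : ∀ᶠ m : ℕ in atTop,
          ‖w (τ₀ + δ) - w τ₀‖ ≤ δ * ‖slope w τ₀ (τ₀ + δ/m)‖ := by
        filter_upwards [eventually_ge_atTop 1] with m hm
        have hmpos : (0:ℝ) < m := by exact_mod_cast hm
        have hδm : (0:ℝ) < δ/m := div_pos hδpos hmpos
        have hsl : slope w τ₀ (τ₀ + δ/m) = (δ/m)⁻¹ • (w (τ₀ + δ/m) - w τ₀) := by
          rw [slope_def_module]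
          congr 1
          ring
        have : δ * ‖slope w τ₀ (τ₀ + δ/m)‖ = (m:ℝ) * ‖w (τ₀ + δ/m) - w τ₀‖ := by
          rw [hsl, norm_smul, norm_inv, Real.norm_eq_abs, abs_of_pos hδm]
          field_simp
        rw [this]
        exact hbound m hm
      have := ge_of_tendsto htend hineq
      linarith [this]
    -- Lipschitz on [τ₀, ∞)
    have stepC : ∀ x y : ℝ, τ₀ ≤ x → x ≤ y → ‖w y - w x‖ ≤ L * (y - x) := by
      intro x y hx hxy
      have h1 := stepA (x - τ₀) (by linarith) (y - x) (by linarith)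
      rw [show τ₀ + (x - τ₀) + (y - x) = y by ring, show τ₀ + (x - τ₀) = x by ring] at h1
      exact le_trans h1 (stepB (y - x) (by linarith))
    -- norm bounds
    have norm_le_add_sub : ∀ x y : H, ‖x‖ ≤ ‖x - y‖ + ‖y‖ := by
      intro x y
      calc ‖x‖ = ‖(x - y) + y‖ := by rw [sub_add_cancel]
        _ ≤ ‖x - y‖ + ‖y‖ := norm_add_le _ _
    have hwτ₀ : ‖w τ₀‖ ≤ M := by
      have h1 : ‖w τ₀ - S n τ₀ 0‖ ≤ ‖u - 0‖ := hcontr n τ₀ (le_of_lt hτ₀pos) u 0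
      have h2 : ‖S n τ₀ 0‖ ≤ C := by
        apply hC n
        calc φ n (S n τ₀ 0) ≤ φ n 0 := hdecay n 0 τ₀ (le_of_lt hτ₀pos)
          _ = 0 := hφ0 n
      calc ‖w τ₀‖ ≤ ‖w τ₀ - S n τ₀ 0‖ + ‖S n τ₀ 0‖ := norm_le_add_sub _ _
        _ ≤ ‖u - 0‖ + C := add_le_add h1 h2
        _ ≤ R + C := by rw [sub_zero]; exact add_le_add (hR u huB) le_rfl
    have hwbd : ∀ τ ∈ Set.Icc τ₀ t, ‖w τ‖ ≤ M + L * t := by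
      intro τ hτ
      calc ‖w τ‖ ≤ ‖w τ - w τ₀‖ + ‖w τ₀‖ := norm_le_add_sub _ _
        _ ≤ L * (τ - τ₀) + M := add_le_add (stepC τ₀ τ le_rfl hτ.1) hwτ₀
        _ ≤ M + L * t := by nlinarith [hτ.2, hτ₀pos, hL0]
    -- the function h = ⟪w, w⟫ and its properties
    set W : ℝ := M + L * t with hWdef
    have hW0 : 0 ≤ W := by nlinarith [hM0, hL0, le_of_lt ht]
    set h : ℝ → ℝ := fun τ => (inner ℝ (w τ) (w τ) : ℝ) with hhdef
    have hnormsq : ∀ τ, h τ = ‖w τ‖^2 := fun τ => real_inner_self_eq_norm_sq _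
    -- Lipschitz bound for h on [τ₀, t]
    have hhlip : LipschitzOnWith (Real.toNNReal (2 * W * L)) h (Set.Icc τ₀ t) := by
      apply LipschitzOnWith.of_dist_le_mul
      intro x hx y hy
      rw [Real.dist_eq, Real.dist_eq]
      have hid : h x - h y = (inner ℝ (w x - w y) (w x + w y) : ℝ) := by
        simp only [hhdef, inner_sub_left, inner_add_right]
        rw [real_inner_comm (w y) (w x)]
        ring
      have hnorm : |h x - h y| ≤ ‖w x - w y‖ * ‖w x + w y‖ := by
        rw [hid]
        exact abs_real_inner_le_norm _ _
      have hsum : ‖w x + w y‖ ≤ 2 * W := by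
        calc ‖w x + w y‖ ≤ ‖w x‖ + ‖w y‖ := norm_add_le _ _
          _ ≤ W + W := add_le_add (hwbd x hx) (hwbd y hy)
          _ = 2 * W := by ring
      have hdiff : ‖w x - w y‖ ≤ L * |x - y| := by
        rcases le_total x y with hxy | hxy
        · rw [abs_of_nonpos (by linarith), ← norm_neg]
          simpa [neg_sub] using stepC x y hx.1 hxy
        · rw [abs_of_nonneg (by linarith)]
          exact stepC y x hy.1 hxy
      have hcoe : ((Real.toNNReal (2 * W * L) : ℝ≥0) : ℝ) = 2 * W * L := by
        rw [Real.coe_toNNReal]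
        positivity
      rw [hcoe]
      calc |h x - h y| ≤ ‖w x - w y‖ * ‖w x + w y‖ := hnorm
        _ ≤ (L * |x - y|) * (2 * W) := by
            apply mul_le_mul hdiff hsum (norm_nonneg _)
            positivity
        _ = 2 * W * L * |x - y| := by ring
    -- the value fT to be bounded
    set fT : ℝ := (φ n (w t)).toReal with hfTdef
    have hfT0 : 0 ≤ fT := ENNReal.toReal_nonneg
    -- a.e. derivative bound for h on (τ₀, t)
    set h' : ℝ → ℝ := fun τ => (inner ℝ (w τ) (u' τ) : ℝ) + (inner ℝ (u' τ) (w τ) : ℝ) with hh'def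
    have hder : ∀ τ ∈ Set.Ioo τ₀ t, τ ∉ ({τ | ¬ P τ} ∩ Set.Ioi 0) →
        HasDerivAt h (h' τ) τ ∧ h' τ ≤ -2 * fT := by
      intro τ hτ hτN
      have hτpos : 0 < τ := lt_trans hτ₀pos hτ.1
      have hPτ : P τ := by
        by_contra hc
        exact hτN ⟨hc, hτpos⟩
      obtain ⟨hdτ, hsdτ⟩ := hPτ
      constructor
      · exact HasDerivAt.inner ℝ hdτ hdτ
      · -- subdifferential inequality with v = 0
        have hsub0 := hsdτ 0
        rw [hφ0 n] at hsub0
        have hinner : (inner ℝ (-(u' τ)) ((0:H) - S n τ u) : ℝ) = (inner ℝ (u' τ) (w τ) : ℝ) := by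
          rw [zero_sub, inner_neg_neg]
        rw [hinner] at hsub0
        have hφτ : φ n (w τ) ≠ ⊤ := ne_top_of_lt (hfin τ hτpos)
        set p : ℝ := (φ n (w τ)).toReal with hpdef
        have hp0 : 0 ≤ p := ENNReal.toReal_nonneg
        have hcoeτ : (φ n (S n τ u) : EReal) = ((p:ℝ) : EReal) := by
          rw [show φ n (S n τ u) = φ n (w τ) from rfl, ← ENNReal.ofReal_toReal hφτ,
            EReal.coe_ennreal_ofReal, max_eq_left hp0]
        rw [hcoeτ] at hsub0
        have hzero : ((0:ℝ≥0∞) : EReal) = (((0:ℝ)) : EReal) := by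
          rw [EReal.coe_ennreal_zero]; rfl
        rw [hzero, ← EReal.coe_add, EReal.coe_le_coe_iff] at hsub0
        -- hsub0 : inner ℝ (u' τ) (w τ) + p ≤ 0
        have hmonot : fT ≤ p := by
          apply ENNReal.toReal_mono hφτ
          have heq : S n t u = S n (t - τ) (w τ) := by
            have h1 := hsemi n (t - τ) (by linarith [hτ.2]) τ (le_of_lt hτpos) u
            rw [show t - τ + τ = t by ring] at h1
            exact h1
          rw [show w t = S n t u from rfl, heq]
          exact hdecay n (w τ) (t - τ) (by linarith [hτ.2])
        have hsymm : (inner ℝ (w τ) (u' τ) : ℝ) = (inner ℝ (u' τ) (w τ) : ℝ) :=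
          real_inner_comm _ _
        simp only [hh'def, hsymm]
        linarith
    -- apply the a.e. mean value theorem
    have hmvt := ae_mvt (le_of_lt (lt_trans hτ₀lt (by linarith))) hhlip hnull hder
    -- conclude
    have hht : 0 ≤ h t := by rw [hnormsq]; positivity
    have hhτ₀ : h τ₀ ≤ M^2 := by
      rw [hnormsq]
      nlinarith [hwτ₀, norm_nonneg (w τ₀), hM0]
    have hgap : t/2 ≤ t - τ₀ := by linarith
    have hfinal : fT * t ≤ M^2 := by
      have e1 : (-2*fT) * (t - τ₀) = -(2 * (fT * (t-τ₀))) := by ring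
      rw [e1] at hmvt
      have h3 := mul_le_mul_of_nonneg_left (show t ≤ 2*(t-τ₀) by linarith) hfT0
      have e2 : fT * t ≤ 2 * (fT * (t-τ₀)) := by
        calc fT * t ≤ fT * (2*(t-τ₀)) := h3
          _ = 2 * (fT * (t-τ₀)) := by ring
      linarith [hmvt, hht, hhτ₀, e2]
    have hfTlam : fT ≤ lam := by
      rw [hlamdef]
      rw [le_div_iff₀ ht]
      linarith
    calc φ n (S n t u) = ENNReal.ofReal fT := by
          rw [hfTdef, ENNReal.ofReal_toReal (ne_top_of_lt (hfin t ht))]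
      _ ≤ ENNReal.ofReal lam := ENNReal.ofReal_le_ofReal hfTlam
  -- conclude compactness
  apply IsCompact.of_isClosed_subset (hsub lam hlam0) isClosed_closure
  apply closure_mono
  intro x hx
  rw [Set.mem_iUnion] at hx ⊢
  obtain ⟨n, y, hy, rfl⟩ := hx
  exact ⟨n, key n y hy⟩
end

section
/- Let q ≥ 2, l > 0 and q' = q/(q-1). Suppose (vₙ) is a sequence in H₀¹(0,l), bounded in H₀¹, with vₙ → v in L²(0,l) and vₙ' ⇀ v' weakly in L²(0,l); suppose zₙ := |vₙ'|^{pₙ-2}vₙ' with pₙ → p ∈ [2,q], zₙ → z in L^{q'}(0,l) and zₙ → z a.e. Then vₙ' → |z|^{1/(p-1)} sgn(z) a.e. and z = |v'|^{p-2}v' a.e. on (0,l). -/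
open MeasureTheory Set Filter Topology

private lemma measurable_realSign : Measurable Real.sign := by
  have : Real.sign = fun r : ℝ => if r < 0 then (-1:ℝ) else if 0 < r then 1 else 0 := rfl
  rw [this]
  exact Measurable.ite (measurableSet_lt measurable_id measurable_const) measurable_const
    (Measurable.ite (measurableSet_lt measurable_const measurable_id) measurable_const
      measurable_const)

private lemma abs_realSign_le_one (s : ℝ) : |Real.sign s| ≤ 1 := by
  rcases Real.sign_apply_eq s with h | h | h <;> rw [h] <;> norm_num

private lemma abs_mul_realSign (s : ℝ) : |s| * Real.sign s = s := by
  rcases lt_trichotomy s 0 with h | h | h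
  · rw [Real.sign_of_neg h, abs_of_neg h]; ring
  · simp [h, Real.sign_zero]
  · rw [Real.sign_of_pos h, abs_of_pos h]; ring

private lemma mul_realSign_eq_abs (s : ℝ) : s * Real.sign s = |s| := by
  rcases lt_trichotomy s 0 with h | h | h
  · rw [Real.sign_of_neg h, abs_of_neg h]; ring
  · simp [h, Real.sign_zero]
  · rw [Real.sign_of_pos h, abs_of_pos h]; ring

private lemma realSign_pos_mul (c s : ℝ) (hc : 0 < c) :
    Real.sign (c * s) = Real.sign s := by
  rcases lt_trichotomy s 0 with h | h | h
  · rw [Real.sign_of_neg h, Real.sign_of_neg (mul_neg_of_pos_of_neg hc h)]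
  · simp [h, Real.sign_zero]
  · rw [Real.sign_of_pos h, Real.sign_of_pos (mul_pos hc h)]

/-- Recovering `s` from `ψ_r(s) = |s|^{r-2} s`. -/
private lemma psi_inv_apply (r : ℝ) (hr : 2 ≤ r) (s : ℝ) :
    |(|s| ^ (r - 2) * s)| ^ (1 / (r - 1)) * Real.sign (|s| ^ (r - 2) * s) = s := by
  rcases eq_or_ne s 0 with rfl | hs
  · simp [Real.sign_zero]
  · have habs : (0:ℝ) < |s| := abs_pos.mpr hs
    have hc : (0:ℝ) < |s| ^ (r - 2) := Real.rpow_pos_of_pos habs _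
    have h1 : |(|s| ^ (r - 2) * s)| = |s| ^ (r - 1) := by
      rw [abs_mul, abs_of_pos hc]
      nth_rewrite 2 [← Real.rpow_one |s|]
      rw [← Real.rpow_add habs]
      congr 1
      ring
    have hr1 : r - 1 ≠ 0 := by linarith
    rw [h1, ← Real.rpow_mul habs.le, mul_one_div, div_self hr1, Real.rpow_one,
      realSign_pos_mul _ _ hc, abs_mul_realSign]

/-- Applying `ψ_p` to `ψ_p⁻¹(c) = |c|^{1/(p-1)} sgn c` gives back `c`. -/
private lemma psi_apply_inv (p : ℝ) (hp : 2 ≤ p) (c : ℝ) :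
    |(|c| ^ (1 / (p - 1)) * Real.sign c)| ^ (p - 2) * (|c| ^ (1 / (p - 1)) * Real.sign c)
      = c := by
  rcases eq_or_ne c 0 with rfl | hc
  · simp [Real.sign_zero]
  · have habs : (0:ℝ) < |c| := abs_pos.mpr hc
    have he : (0:ℝ) < |c| ^ (1 / (p - 1)) := Real.rpow_pos_of_pos habs _
    have hp1 : p - 1 ≠ 0 := by linarith
    have h1 : |(|c| ^ (1 / (p - 1)) * Real.sign c)| = |c| ^ (1 / (p - 1)) := by
      rw [abs_mul, abs_of_pos he]
      rcases Real.sign_apply_eq_of_ne_zero c hc with h | h <;> rw [h] <;> norm_num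
    rw [h1, ← Real.rpow_mul habs.le]
    have h2 : |c| ^ (1 / (p - 1) * (p - 2)) * (|c| ^ (1 / (p - 1)) * Real.sign c)
        = (|c| ^ (1 / (p - 1) * (p - 2)) * |c| ^ (1 / (p - 1))) * Real.sign c := by ring
    rw [h2, ← Real.rpow_add habs]
    have h3 : 1 / (p - 1) * (p - 2) + 1 / (p - 1) = 1 := by field_simp; ring
    rw [h3, Real.rpow_one, abs_mul_realSign]

/-- Joint continuity of `(r, w) ↦ |w|^{1/(r-1)} sgn w` along sequences. -/
private lemma tendsto_psi_inv (q p : ℝ) (pn : ℕ → ℝ)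
    (hpn : ∀ n, pn n ∈ Set.Icc 2 q) (hp2 : 2 ≤ p)
    (hpconv : Tendsto pn atTop (nhds p)) (w : ℕ → ℝ) (c : ℝ)
    (hw : Tendsto w atTop (nhds c)) :
    Tendsto (fun n => |w n| ^ (1 / (pn n - 1)) * Real.sign (w n)) atTop
      (nhds (|c| ^ (1 / (p - 1)) * Real.sign c)) := by
  have hq2 : 2 ≤ q := le_trans (hpn 0).1 (hpn 0).2
  have hq1 : (0:ℝ) < q - 1 := by linarith
  rcases eq_or_ne c 0 with rfl | hc
  · -- zero case : squeeze
    rw [show |(0:ℝ)| ^ (1 / (p - 1)) * Real.sign 0 = 0 by simp [Real.sign_zero]]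
    have hup : Tendsto (fun n => |w n| ^ (1 / (q - 1))) atTop (nhds 0) := by
      have h0 : Tendsto (fun n => |w n|) atTop (nhds 0) := by
        simpa using hw.abs
      have := h0.rpow_const (p := 1 / (q - 1)) (Or.inr (by positivity))
      rwa [Real.zero_rpow (ne_of_gt (one_div_pos.mpr hq1))] at this
    have hsmall : ∀ᶠ n in atTop, |w n| ≤ 1 := by
      have h0 : Tendsto (fun n => |w n|) atTop (nhds 0) := by simpa using hw.abs
      exact h0.eventually (eventually_le_nhds (by norm_num))
    have hle : ∀ᶠ n in atTop,
        |(|w n| ^ (1 / (pn n - 1)) * Real.sign (w n))| ≤ |w n| ^ (1 / (q - 1)) := by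
      filter_upwards [hsmall] with n hn
      have hpn1 : (0:ℝ) < pn n - 1 := by have := (hpn n).1; linarith
      have hpnq : pn n - 1 ≤ q - 1 := by have := (hpn n).2; linarith
      have hee : 1 / (q - 1) ≤ 1 / (pn n - 1) := one_div_le_one_div_of_le hpn1 hpnq
      rcases eq_or_ne (w n) 0 with h0 | h0
      · simp only [h0, abs_zero, Real.sign_zero, mul_zero]
        exact Real.rpow_nonneg le_rfl _
      · have hwpos : 0 < |w n| := abs_pos.mpr h0
        have hb : |w n| ^ (1 / (pn n - 1)) ≤ |w n| ^ (1 / (q - 1)) :=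
          Real.rpow_le_rpow_of_exponent_ge hwpos hn hee
        calc |(|w n| ^ (1 / (pn n - 1)) * Real.sign (w n))|
            = |w n| ^ (1 / (pn n - 1)) * |Real.sign (w n)| := by
              rw [abs_mul, abs_of_nonneg (Real.rpow_nonneg (abs_nonneg _) _)]
          _ ≤ |w n| ^ (1 / (pn n - 1)) * 1 :=
              mul_le_mul_of_nonneg_left (abs_realSign_le_one _)
                (Real.rpow_nonneg (abs_nonneg _) _)
          _ ≤ |w n| ^ (1 / (q - 1)) := by rw [mul_one]; exact hb
    rw [tendsto_zero_iff_abs_tendsto_zero]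
    exact squeeze_zero' (Eventually.of_forall fun n => abs_nonneg _) hle hup
  · -- nonzero case
    have habs : (0:ℝ) < |c| := abs_pos.mpr hc
    have hexp : Tendsto (fun n => 1 / (pn n - 1)) atTop (nhds (1 / (p - 1))) := by
      exact tendsto_const_nhds.div (hpconv.sub tendsto_const_nhds) (by linarith)
    have hmain : Tendsto (fun n => |w n| ^ (1 / (pn n - 1))) atTop
        (nhds (|c| ^ (1 / (p - 1)))) :=
      hw.abs.rpow hexp (Or.inl habs.ne')
    have hsign : ∀ᶠ n in atTop, Real.sign (w n) = Real.sign c := by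
      rcases lt_or_gt_of_ne hc with hneg | hpos
      · filter_upwards [hw.eventually (eventually_lt_nhds hneg)] with n hn
        rw [Real.sign_of_neg hn, Real.sign_of_neg hneg]
      · filter_upwards [hw.eventually (eventually_gt_nhds hpos)] with n hn
        rw [Real.sign_of_pos hn, Real.sign_of_pos hpos]
    have := hmain.mul (tendsto_const_nhds (x := Real.sign c))
    refine Tendsto.congr' ?_ this
    filter_upwards [hsign] with n hn
    rw [hn]

/-- Identification of weak limits: if `(gₙ)` (playing the role of `vₙ'`) is bounded in
`L²(0,l)` and converges weakly in `L²` to `g₀` (`= v'`), and `zₙ := |gₙ|^{pₙ-2} gₙ → z` a.e.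
with `pₙ → p ∈ [2,q]`, then `gₙ → |z|^{1/(p-1)} sgn z` a.e. and `z = |g₀|^{p-2} g₀` a.e. -/
theorem stmt18 (q l : ℝ) (hq : 2 ≤ q) (hl : 0 < l)
    (p : ℝ) (pn : ℕ → ℝ) (hpn : ∀ n, pn n ∈ Set.Icc 2 q) (hp : p ∈ Set.Icc 2 q)
    (hpconv : Tendsto pn atTop (nhds p))
    (g : ℕ → ℝ → ℝ) (g0 z : ℝ → ℝ)
    (hgm : ∀ n, Measurable (g n)) (hg0m : Measurable g0) (hzm : Measurable z)
    (hbd : ∃ C : ℝ, ∀ n, ∫ x in Set.Ioo (0:ℝ) l, (g n x) ^ 2 ≤ C)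
    (hweak : ∀ φ : ℝ → ℝ, MemLp φ 2 (volume.restrict (Set.Ioo (0:ℝ) l)) →
      Tendsto (fun n => ∫ x in Set.Ioo (0:ℝ) l, g n x * φ x) atTop
        (nhds (∫ x in Set.Ioo (0:ℝ) l, g0 x * φ x)))
    (hzae : ∀ᵐ x ∂(volume.restrict (Set.Ioo (0:ℝ) l)),
      Tendsto (fun n => |g n x| ^ (pn n - 2) * g n x) atTop (nhds (z x))) :
    (∀ᵐ x ∂(volume.restrict (Set.Ioo (0:ℝ) l)),
      Tendsto (fun n => g n x) atTop (nhds (|z x| ^ (1 / (p - 1)) * Real.sign (z x)))) ∧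
    (∀ᵐ x ∂(volume.restrict (Set.Ioo (0:ℝ) l)), z x = |g0 x| ^ (p - 2) * g0 x) := by
  set μ := volume.restrict (Set.Ioo (0:ℝ) l) with hμdef
  haveI : IsFiniteMeasure μ := by
    constructor
    rw [hμdef, Measure.restrict_apply_univ]
    exact measure_Ioo_lt_top
  set h : ℝ → ℝ := fun x => |z x| ^ (1 / (p - 1)) * Real.sign (z x) with hhdef
  have hhm : Measurable h := by
    apply Measurable.mul
    · measurability
    · exact measurable_realSign.comp hzm
  -- Part 1
  have part1 : ∀ᵐ x ∂μ, Tendsto (fun n => g n x) atTop (nhds (h x)) := by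
    filter_upwards [hzae] with x hx
    have := tendsto_psi_inv q p pn hpn hp.1 hpconv
      (fun n => |g n x| ^ (pn n - 2) * g n x) (z x) hx
    exact this.congr fun n => psi_inv_apply (pn n) (hpn n).1 (g n x)
  refine ⟨part1, ?_⟩
  -- Part 2 : identify h = g0 a.e.
  set A : ℕ → Set ℝ := fun M =>
    {x | ∀ n, |g n x| ≤ (M:ℝ)} ∩ {x | |g0 x| ≤ (M:ℝ)} with hAdef
  have hAmeas : ∀ M, MeasurableSet (A M) := by
    intro M
    apply MeasurableSet.inter
    · rw [show {x | ∀ n, |g n x| ≤ (M:ℝ)} = ⋂ n, {x | |g n x| ≤ (M:ℝ)} by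
        ext x; simp]
      exact MeasurableSet.iInter fun n =>
        measurableSet_le (hgm n).abs measurable_const
    · exact measurableSet_le hg0m.abs measurable_const
  have key : ∀ M : ℕ, ∀ᵐ x ∂μ, x ∈ A M → h x = g0 x := by
    intro M
    set φ : ℝ → ℝ := (A M).indicator (fun x => Real.sign (h x - g0 x)) with hφdef
    have hφm : Measurable φ :=
      (measurable_realSign.comp (hhm.sub hg0m)).indicator (hAmeas M)
    have hφbd : ∀ x, |φ x| ≤ 1 := by
      intro x
      rw [hφdef]
      by_cases hx : x ∈ A M
      · rw [Set.indicator_of_mem hx]; exact abs_realSign_le_one _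
      · rw [Set.indicator_of_notMem hx]; norm_num
    have hφLp : MemLp φ 2 μ :=
      MemLp.of_bound hφm.aestronglyMeasurable 1
        (Eventually.of_forall fun x => by rw [Real.norm_eq_abs]; exact hφbd x)
    have T1 : Tendsto (fun n => ∫ x, g n x * φ x ∂μ) atTop
        (nhds (∫ x, g0 x * φ x ∂μ)) := hweak φ hφLp
    -- the dominating function
    set bnd : ℝ → ℝ := (A M).indicator (fun _ => (M:ℝ)) with hbnddef
    have hbndint : Integrable bnd μ :=
      (integrable_const ((M:ℝ))).indicator (hAmeas M)
    have hFbound : ∀ f : ℝ → ℝ, (∀ x ∈ A M, |f x| ≤ (M:ℝ)) →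
        ∀ x, ‖f x * φ x‖ ≤ bnd x := by
      intro f hf x
      rw [Real.norm_eq_abs, abs_mul, hbnddef]
      by_cases hx : x ∈ A M
      · rw [Set.indicator_of_mem hx]
        calc |f x| * |φ x| ≤ (M:ℝ) * 1 :=
              mul_le_mul (hf x hx) (hφbd x) (abs_nonneg _) (Nat.cast_nonneg M)
          _ = (M:ℝ) := mul_one _
      · rw [Set.indicator_of_notMem hx, hφdef, Set.indicator_of_notMem hx]
        simp
    have T2 : Tendsto (fun n => ∫ x, g n x * φ x ∂μ) atTop
        (nhds (∫ x, h x * φ x ∂μ)) := by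
      apply tendsto_integral_of_dominated_convergence bnd
        (fun n => ((hgm n).mul hφm).aestronglyMeasurable) hbndint
      · intro n
        exact Eventually.of_forall (hFbound (g n) (fun x hx => hx.1 n))
      · filter_upwards [part1] with x hx
        exact hx.mul_const _
    have heq : ∫ x, h x * φ x ∂μ = ∫ x, g0 x * φ x ∂μ :=
      tendsto_nhds_unique T2 T1
    -- integrability of the two products
    have hhA : ∀ᵐ x ∂μ, x ∈ A M → |h x| ≤ (M:ℝ) := by
      filter_upwards [part1] with x hx hxA
      have : Tendsto (fun n => |g n x|) atTop (nhds (|h x|)) := hx.abs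
      exact le_of_tendsto this (Eventually.of_forall fun n => hxA.1 n)
    have hinth : Integrable (fun x => h x * φ x) μ := by
      apply Integrable.mono hbndint (hhm.mul hφm).aestronglyMeasurable
      filter_upwards [hhA] with x hx
      rw [Real.norm_eq_abs (bnd x), hbnddef]
      by_cases hxA : x ∈ A M
      · rw [Set.indicator_of_mem hxA, abs_of_nonneg (Nat.cast_nonneg M),
          Real.norm_eq_abs, Pi.mul_apply, abs_mul]
        calc |h x| * |φ x| ≤ (M:ℝ) * 1 :=
              mul_le_mul (hx hxA) (hφbd x) (abs_nonneg _) (Nat.cast_nonneg M)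
          _ = (M:ℝ) := mul_one _
      · rw [Set.indicator_of_notMem hxA]
        have : φ x = 0 := by rw [hφdef, Set.indicator_of_notMem hxA]
        simp [this]
    have hintg0 : Integrable (fun x => g0 x * φ x) μ := by
      apply Integrable.mono hbndint (hg0m.mul hφm).aestronglyMeasurable
      apply Eventually.of_forall
      intro x
      rw [Real.norm_eq_abs (bnd x), hbnddef]
      by_cases hxA : x ∈ A M
      · rw [Set.indicator_of_mem hxA, abs_of_nonneg (Nat.cast_nonneg M)]
        exact hFbound g0 (fun y hy => hy.2) x |>.trans_eq
          (by rw [hbnddef, Set.indicator_of_mem hxA])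
      · rw [Set.indicator_of_notMem hxA]
        have : φ x = 0 := by rw [hφdef, Set.indicator_of_notMem hxA]
        simp [this]
    -- the difference integrates to 0 and is the indicator of |h - g0|
    have hzero : ∫ x, (h x - g0 x) * φ x ∂μ = 0 := by
      have : (fun x => (h x - g0 x) * φ x)
          = fun x => h x * φ x - g0 x * φ x := by funext x; ring
      rw [this, integral_sub hinth hintg0, heq, sub_self]
    have habsid : ∀ x, (h x - g0 x) * φ x = (A M).indicator (fun y => |h y - g0 y|) x := by
      intro x
      by_cases hxA : x ∈ A M
      · rw [Set.indicator_of_mem hxA, hφdef, Set.indicator_of_mem hxA]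
        exact mul_realSign_eq_abs _
      · rw [Set.indicator_of_notMem hxA, hφdef, Set.indicator_of_notMem hxA, mul_zero]
    have hintabs : Integrable ((A M).indicator (fun y => |h y - g0 y|)) μ := by
      have : Integrable (fun x => (h x - g0 x) * φ x) μ := by
        have : (fun x => (h x - g0 x) * φ x)
            = fun x => h x * φ x - g0 x * φ x := by funext x; ring
        rw [this]; exact hinth.sub hintg0
      exact (funext habsid : _) ▸ this
    have hzero' : ∫ x, (A M).indicator (fun y => |h y - g0 y|) x ∂μ = 0 := by
      rw [← hzero]; exact integral_congr_ae (Eventually.of_forall fun x => (habsid x).symm)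
    have hae0 : (A M).indicator (fun y => |h y - g0 y|) =ᵐ[μ] 0 :=
      (integral_eq_zero_iff_of_nonneg
        (fun x => Set.indicator_nonneg (fun y _ => abs_nonneg _) x) hintabs).mp hzero'
    filter_upwards [hae0] with x hx hxA
    rw [Set.indicator_of_mem hxA] at hx
    have : |h x - g0 x| = 0 := hx
    have := abs_eq_zero.mp this
    linarith [this]
  -- a.e. every point is in some A M
  have hcover : ∀ᵐ x ∂μ, ∃ M : ℕ, x ∈ A M := by
    filter_upwards [part1] with x hx
    obtain ⟨C, hC⟩ := hx.abs.bddAbove_range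
    set M := ⌈max C |g0 x|⌉₊ with hM
    refine ⟨M, fun n => ?_, ?_⟩
    · calc |g n x| ≤ C := hC ⟨n, rfl⟩
        _ ≤ max C |g0 x| := le_max_left _ _
        _ ≤ (M:ℝ) := Nat.le_ceil _
    · calc |g0 x| ≤ max C |g0 x| := le_max_right _ _
        _ ≤ (M:ℝ) := Nat.le_ceil _
  have hall : ∀ᵐ x ∂μ, ∀ M : ℕ, x ∈ A M → h x = g0 x := ae_all_iff.mpr key
  have hhg0 : ∀ᵐ x ∂μ, h x = g0 x := by
    filter_upwards [hcover, hall] with x hx hall'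
    obtain ⟨M, hM⟩ := hx
    exact hall' M hM
  -- conclude
  filter_upwards [hhg0] with x hx
  rw [← hx, hhdef]
  exact (psi_apply_inv p hp.1 (z x)).symm
end
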